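/- Let d ≥ 1, r ≥ 2, and let A_0, …, A_{r-1} ∈ M_d(ℂ) be pairwise commuting Hermitian d × d matrices. Let V_0, …, V_{r-1} ∈ M_d(ℂ) be arbitrary, and define the matrix sequence (Y_n)_{n≥0} by Y_i = V_i for i = 0, …, r−1 and Y_n = A_0 Y_{n-1} + A_1 Y_{n-2} + ⋯ + A_{r-1} Y_{n-r} for n ≥ r. Then for every n ≥ r, Y_n = Σ_{s=0}^{r-1} ρ(n−s, r; A) W_s, where W_s := Σ_{j=s}^{r-1} A_j V_{s+r-1-j} for s = 0, …, r−1. -/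

import Mathlib

open Finset

/-- The combinatorial matrix coefficient `ρ(m, r; A)`: the sum, over multi-indices
`k = (k₀, …, k_{r-1}) ∈ ℤ₊ʳ` with `1·k₀ + 2·k₁ + ⋯ + r·k_{r-1} = m − r`, of the multinomial
coefficient `(k₀+⋯+k_{r-1})! / (k₀!⋯k_{r-1}!)` times `A₀^{k₀} ⋯ A_{r-1}^{k_{r-1}}`,
with the convention `ρ(m, r; A) = 0` for `m < r` (and in particular `ρ(r, r; A) = I`). -/
noncomputable def rho {R : Type*} [Ring R] (r : ℕ) (A : ℕ → R) (m : ℕ) : R :=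
  if m < r then 0
  else ∑ k ∈ (Fintype.piFinset fun _ : Fin r => Finset.range (m - r + 1)).filter
      (fun k : Fin r → ℕ => ∑ j : Fin r, ((j : ℕ) + 1) * k j = m - r),
    (Nat.multinomial Finset.univ k : R) * (List.ofFn fun j : Fin r => A (j : ℕ) ^ k j).prod

/-!
By the multinomial Pascal rule `multinomial k = ∑_{k_j ≠ 0} multinomial (k - e_j)` and
`A_j A^(k - e_j) = A^k` (the `A_j` generate a commutative subring), `ρ(·, r; A)` is the fundamental
solution of the recurrence: `ρ(m) = [m = r] + ∑_j A_j ρ(m - j - 1)`. Hence `Z_n = ∑_s ρ(n - s) W_s`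
satisfies the recurrence up to the source term `W_{n-r}`, and that term is exactly what the initial
values `V_i`, `i < r`, contribute to `∑_j A_j Y_{n-j-1}`. So the sequence equal to `V` below `r` and
to `Z` from `r` on solves the recurrence with the initial values of `Y`, and therefore equals `Y`.
-/

theorem Pi.exists_eq_add_single_one {ι : Type*} [DecidableEq ι] {k : ι → ℕ} {j : ι}
    (hj : k j ≠ 0) : ∃ l : ι → ℕ, k = l + Pi.single j 1 := by
  refine ⟨k - Pi.single j 1, (tsub_add_cancel_of_le fun i => ?_).symm⟩
  rcases eq_or_ne i j with rfl | hij <;> simp [*, Nat.one_le_iff_ne_zero]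

namespace Nat

variable {ι : Type*} [Fintype ι] [DecidableEq ι]

theorem succ_mul_multinomial_add_single (k : ι → ℕ) (j : ι) :
    (k j + 1) * multinomial univ (k + Pi.single j 1) = (∑ i, k i + 1) * multinomial univ k := by
  have hprod : ∏ i, ((k + Pi.single j 1 : ι → ℕ) i)! = (k j + 1) * ∏ i, (k i)! := by
    rw [← mul_prod_erase univ _ (mem_univ j), ← mul_prod_erase univ (fun i => (k i)!) (mem_univ j),
      Pi.add_apply, Pi.single_eq_same, factorial_succ, mul_assoc]
    congr 2
    exact prod_congr rfl fun i hi => by simp [Pi.single_eq_of_ne (ne_of_mem_erase hi)]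
  have hsum : ∑ i, (k + Pi.single j 1 : ι → ℕ) i = ∑ i, k i + 1 := by
    simp [sum_add_distrib]
  apply Nat.eq_of_mul_eq_mul_left (prod_factorial_pos univ k)
  calc (∏ i, (k i)!) * ((k j + 1) * multinomial univ (k + Pi.single j 1))
      = (∏ i, ((k + Pi.single j 1 : ι → ℕ) i)!) * multinomial univ (k + Pi.single j 1) := by
        rw [hprod]; ring
    _ = (∑ i, k i + 1) * ((∏ i, (k i)!) * multinomial univ k) := by
        rw [multinomial_spec, multinomial_spec, hsum, factorial_succ]
    _ = _ := by ring

theorem multinomial_eq_sum_multinomial_sub_single {k : ι → ℕ} (hk : k ≠ 0) :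
    multinomial univ k = ∑ j ∈ univ.filter (k · ≠ 0), multinomial univ (k - Pi.single j 1) := by
  have hpos : 0 < ∑ i, k i := Nat.pos_of_ne_zero (by simpa [sum_eq_zero_iff, funext_iff] using hk)
  apply Nat.eq_of_mul_eq_mul_left hpos
  calc (∑ i, k i) * multinomial univ k
      = ∑ j ∈ univ.filter (k · ≠ 0), k j * multinomial univ k := by
        rw [← sum_mul, sum_filter_ne_zero]
    _ = _ := by
      rw [mul_sum]
      refine sum_congr rfl fun j hj => ?_
      obtain ⟨l, rfl⟩ := Pi.exists_eq_add_single_one (mem_filter.1 hj).2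
      rw [add_tsub_cancel_right]
      simpa [sum_add_distrib] using succ_mul_multinomial_add_single l j

end Nat

section MultiIndex

variable {r : ℕ}

def multiIndexWeight (k : Fin r → ℕ) : ℕ := ∑ j : Fin r, ((j : ℕ) + 1) * k j

def multiIndicesOfWeight (r t : ℕ) : Finset (Fin r → ℕ) :=
  (Fintype.piFinset fun _ : Fin r => range (t + 1)).filter (multiIndexWeight · = t)

theorem le_multiIndexWeight (k : Fin r → ℕ) (j : Fin r) :
    ((j : ℕ) + 1) * k j ≤ multiIndexWeight k :=
  single_le_sum (f := fun i : Fin r => ((i : ℕ) + 1) * k i) (fun _ _ => Nat.zero_le _) (mem_univ j)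

theorem mem_multiIndicesOfWeight {t : ℕ} {k : Fin r → ℕ} :
    k ∈ multiIndicesOfWeight r t ↔ multiIndexWeight k = t := by
  simp only [multiIndicesOfWeight, mem_filter, Fintype.mem_piFinset, mem_range,
    and_iff_right_iff_imp]
  rintro rfl j
  exact Nat.lt_succ_of_le ((Nat.le_mul_of_pos_left _ j.succ_pos).trans (le_multiIndexWeight k j))

theorem multiIndexWeight_add (k l : Fin r → ℕ) :
    multiIndexWeight (k + l) = multiIndexWeight k + multiIndexWeight l := by
  simp [multiIndexWeight, mul_add, sum_add_distrib]

theorem multiIndexWeight_single (j : Fin r) (n : ℕ) :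
    multiIndexWeight (Pi.single j n) = ((j : ℕ) + 1) * n := by
  simp [multiIndexWeight, Pi.single_apply]

theorem multiIndexWeight_eq_zero {k : Fin r → ℕ} : multiIndexWeight k = 0 ↔ k = 0 := by
  simp [multiIndexWeight, sum_eq_zero_iff, funext_iff]

theorem multiIndicesOfWeight_zero : multiIndicesOfWeight r 0 = {0} := by
  ext k
  rw [mem_multiIndicesOfWeight, multiIndexWeight_eq_zero, mem_singleton]

theorem filter_multiIndicesOfWeight_ne_zero (j : Fin r) (t : ℕ) :
    (multiIndicesOfWeight r (t + (j + 1))).filter (· j ≠ 0) =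
      (multiIndicesOfWeight r t).map (addRightEmbedding (Pi.single j 1)) := by
  ext k
  simp only [mem_filter, mem_map, mem_multiIndicesOfWeight, addRightEmbedding_apply]
  constructor
  · rintro ⟨hk, hkj⟩
    obtain ⟨l, rfl⟩ := Pi.exists_eq_add_single_one hkj
    refine ⟨l, ?_, rfl⟩
    rw [multiIndexWeight_add, multiIndexWeight_single] at hk
    omega
  · rintro ⟨l, hl, rfl⟩
    simp [multiIndexWeight_add, multiIndexWeight_single, hl]

end MultiIndex

theorem Finset.prod_pow_add_single {ι M : Type*} [Fintype ι] [DecidableEq ι] [CommMonoid M]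
    (a : ι → M) (k : ι → ℕ) (j : ι) :
    ∏ i, a i ^ (k + Pi.single j 1 : ι → ℕ) i = a j * ∏ i, a i ^ k i := by
  simp only [Pi.add_apply, pow_add, prod_mul_distrib, mul_comm (∏ i, a i ^ k i)]
  simp [Pi.single_apply, pow_ite]

theorem sum_multiIndicesOfWeight_succ {R : Type*} [CommRing R] {r : ℕ} (a : Fin r → R) (t : ℕ) :
    ∑ k ∈ multiIndicesOfWeight r (t + 1), (Nat.multinomial univ k : R) * ∏ i, a i ^ k i =
      ∑ j : Fin r, if (j : ℕ) ≤ t then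
        a j * ∑ k ∈ multiIndicesOfWeight r (t - j), (Nat.multinomial univ k : R) * ∏ i, a i ^ k i
      else 0 := by
  calc _ = ∑ k ∈ multiIndicesOfWeight r (t + 1), ∑ j ∈ univ.filter (k · ≠ 0),
          (Nat.multinomial univ (k - Pi.single j 1) : R) * ∏ i, a i ^ k i := by
        refine sum_congr rfl fun k hk => ?_
        have hk0 : k ≠ 0 := by
          rintro rfl
          simp [mem_multiIndicesOfWeight, multiIndexWeight] at hk
        rw [Nat.multinomial_eq_sum_multinomial_sub_single hk0, Nat.cast_sum, sum_mul]
    _ = ∑ j : Fin r, ∑ k ∈ (multiIndicesOfWeight r (t + 1)).filter (· j ≠ 0),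
          (Nat.multinomial univ (k - Pi.single j 1) : R) * ∏ i, a i ^ k i := by
        apply sum_comm'
        simp [and_comm]
    _ = _ := by
        refine sum_congr rfl fun j _ => ?_
        split_ifs with hj
        · obtain ⟨u, rfl⟩ := Nat.exists_eq_add_of_le hj
          rw [show (j : ℕ) + u + 1 = u + (j + 1) by ring, filter_multiIndicesOfWeight_ne_zero,
            sum_map, mul_sum, Nat.add_sub_cancel_left]
          refine sum_congr rfl fun k _ => ?_
          rw [addRightEmbedding_apply, add_tsub_cancel_right, prod_pow_add_single, mul_left_comm]
        · refine sum_eq_zero fun k hk => ?_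
          rw [mem_filter, mem_multiIndicesOfWeight] at hk
          have hle := le_multiIndexWeight k j
          have hpos : (j : ℕ) + 1 ≤ ((j : ℕ) + 1) * k j :=
            Nat.le_mul_of_pos_right _ (Nat.pos_of_ne_zero hk.2)
          omega

section Rho

variable {R : Type*} [Ring R] {r : ℕ}

theorem rho_of_lt (A : ℕ → R) {m : ℕ} (h : m < r) : rho r A m = 0 := if_pos h

theorem rho_of_le (A : ℕ → R) {m : ℕ} (h : r ≤ m) :
    rho r A m = ∑ k ∈ multiIndicesOfWeight r (m - r),
      (Nat.multinomial univ k : R) * (List.ofFn fun j : Fin r => A j ^ k j).prod :=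
  if_neg h.not_gt

theorem rho_self (A : ℕ → R) : rho r A r = 1 := by
  rw [rho_of_le A le_rfl, Nat.sub_self, multiIndicesOfWeight_zero, sum_singleton]
  simp [Nat.multinomial]

theorem map_rho {S : Type*} [Ring S] (f : R →+* S) (A : ℕ → R) (m : ℕ) :
    f (rho r A m) = rho r (fun j => f (A j)) m := by
  unfold rho
  split_ifs <;> simp [map_list_prod, List.map_ofFn, Function.comp_def]

theorem rho_congr {A B : ℕ → R} (h : ∀ j < r, A j = B j) (m : ℕ) : rho r A m = rho r B m := by
  have h' : ∀ j : Fin r, A j = B j := fun j => h j j.2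
  simp only [rho, h']

end Rho

theorem rho_eq_ite_add_sum_of_comm {R : Type*} [CommRing R] {r : ℕ} (A : ℕ → R) (m : ℕ) :
    rho r A m = (if m = r then 1 else 0) + ∑ j ∈ range r, A j * rho r A (m - (j + 1)) := by
  rcases lt_trichotomy m r with hm | rfl | hm
  · rw [rho_of_lt A hm, if_neg hm.ne, sum_eq_zero fun j _ => by
      rw [rho_of_lt A (by omega), mul_zero]]
    simp
  · rw [rho_self, if_pos rfl, sum_eq_zero fun j hj => by
      rw [rho_of_lt A (by simp at hj; omega), mul_zero]]
    simp
  · obtain ⟨t, rfl⟩ := Nat.exists_eq_add_of_lt hm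
    rw [if_neg (by omega), zero_add, rho_of_le A hm.le, show r + t + 1 - r = t + 1 by omega]
    simp only [List.prod_ofFn]
    rw [sum_multiIndicesOfWeight_succ,
      ← Fin.sum_univ_eq_sum_range (fun j => A j * rho r A (r + t + 1 - (j + 1)))]
    refine sum_congr rfl fun j _ => ?_
    split_ifs with hj
    · rw [rho_of_le A (by omega), show r + t + 1 - (j + 1) - r = t - j by omega]
      simp only [List.prod_ofFn]
    · rw [rho_of_lt A (by omega), mul_zero]

open scoped IsMulCommutative in
theorem rho_eq_ite_add_sum {R : Type*} [Ring R] {r : ℕ} {A : ℕ → R}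
    (hA : ∀ i < r, ∀ j < r, Commute (A i) (A j)) (m : ℕ) :
    rho r A m = (if m = r then 1 else 0) + ∑ j ∈ range r, A j * rho r A (m - (j + 1)) := by
  let S := Subring.closure (A '' Set.Iio r)
  have : IsMulCommutative S := Subring.isMulCommutative_closure <| by
    rintro _ ⟨i, hi, rfl⟩ _ ⟨j, hj, rfl⟩
    exact hA i hi j hj
  let B : ℕ → S := fun j => if hj : j < r then ⟨A j, Subring.subset_closure ⟨j, hj, rfl⟩⟩ else 0
  have hB : ∀ j < r, S.subtype (B j) = A j := fun j hj => by simp [B, hj]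
  have hρ : ∀ n, rho r A n = S.subtype (rho r B n) := fun n => by
    rw [map_rho]
    exact rho_congr (fun j hj => (hB j hj).symm) n
  rw [hρ, rho_eq_ite_add_sum_of_comm, map_add, map_sum]
  congr 1
  · split_ifs <;> simp
  · refine sum_congr rfl fun j hj => ?_
    rw [map_mul, hB j (mem_range.1 hj), hρ]

theorem sum_rho_sub_mul_eq {R : Type*} [Ring R] {r : ℕ} {A : ℕ → R}
    (hA : ∀ i < r, ∀ j < r, Commute (A i) (A j)) (W : ℕ → R) (n : ℕ) :
    ∑ s ∈ range r, rho r A (n - s) * W s =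
      ∑ s ∈ range r, (if n - s = r then W s else 0) +
        ∑ j ∈ range r, A j * ∑ s ∈ range r, rho r A (n - (j + 1) - s) * W s := by
  simp_rw [rho_eq_ite_add_sum hA (n - _), add_mul, sum_add_distrib, ite_mul, one_mul, zero_mul,
    sum_mul, mul_sum, mul_assoc, Nat.sub_right_comm n]
  rw [sum_comm]

theorem eq_of_recurrence_of_forall_lt {R : Type*} [Semiring R] {r : ℕ} {A X Y : ℕ → R}
    (hX : ∀ n, r ≤ n → X n = ∑ j ∈ range r, A j * X (n - (j + 1)))
    (hY : ∀ n, r ≤ n → Y n = ∑ j ∈ range r, A j * Y (n - (j + 1)))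
    (hXY : ∀ n < r, X n = Y n) : X = Y := by
  funext n
  induction n using Nat.strong_induction_on with
  | _ n ih =>
    rcases lt_or_ge n r with hn | hn
    · exact hXY n hn
    · rw [hX n hn, hY n hn]
      exact sum_congr rfl fun j hj => by rw [ih _ (by simp at hj; omega)]

theorem sum_ite_sub_eq_sum_ite_lt {R : Type*} [Semiring R] {r n : ℕ} (hn : r ≤ n)
    (A V : ℕ → R) :
    ∑ s ∈ range r, (if n - s = r then ∑ j ∈ Icc s (r - 1), A j * V (s + (r - 1 - j)) else 0) =
      ∑ j ∈ range r, if n - (j + 1) < r then A j * V (n - (j + 1)) else 0 := by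
  have hcond : ∀ s ∈ range r, (n - s = r ↔ n - r = s) := fun s hs => by
    rw [mem_range] at hs
    omega
  rw [sum_congr rfl fun s hs => if_congr (hcond s hs) rfl rfl, sum_ite_eq, ← sum_filter]
  split_ifs with hnr
  · have hIcc : (range r).filter (fun j => n - (j + 1) < r) = Icc (n - r) (r - 1) := by
      ext j
      simp only [mem_filter, mem_range, mem_Icc] at hnr ⊢
      omega
    rw [hIcc]
    refine sum_congr rfl fun j hj => ?_
    rw [mem_Icc] at hj
    rw [show n - r + (r - 1 - j) = n - (j + 1) by omega]
  · refine (sum_eq_zero fun j hj => ?_).symm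
    rw [mem_filter, mem_range] at hj
    rw [mem_range] at hnr
    omega

theorem eq_sum_rho_mul_of_recurrence {R : Type*} [Ring R] {r : ℕ} {A V Y : ℕ → R}
    (hA : ∀ i < r, ∀ j < r, Commute (A i) (A j)) (hinit : ∀ i < r, Y i = V i)
    (hrec : ∀ n, r ≤ n → Y n = ∑ j ∈ range r, A j * Y (n - (j + 1))) {n : ℕ} (hn : r ≤ n) :
    Y n = ∑ s ∈ range r, rho r A (n - s) * ∑ j ∈ Icc s (r - 1), A j * V (s + (r - 1 - j)) := by
  obtain ⟨Z, hZ⟩ : ∃ Z : ℕ → R, ∀ n, Z n =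
      ∑ s ∈ range r, rho r A (n - s) * ∑ j ∈ Icc s (r - 1), A j * V (s + (r - 1 - j)) :=
    ⟨_, fun _ => rfl⟩
  have hZ_lt : ∀ n < r, Z n = 0 := fun n hn => by
    rw [hZ]
    exact sum_eq_zero fun s _ => by rw [rho_of_lt A (by omega), zero_mul]
  have hY : (fun n => if n < r then V n else Z n) = Y := by
    refine eq_of_recurrence_of_forall_lt (fun n hn => ?_) hrec fun n hn => by simp [hn, hinit]
    simp only [if_neg (not_lt.2 hn)]
    rw [hZ n, sum_rho_sub_mul_eq hA, sum_ite_sub_eq_sum_ite_lt hn, ← sum_add_distrib]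
    refine sum_congr rfl fun j _ => ?_
    split_ifs with h
    · rw [← hZ, hZ_lt _ h, mul_zero, add_zero]
    · rw [zero_add, hZ]
  simpa [not_lt.2 hn, hZ] using (congrFun hY n).symm

theorem matrix_recurrence_combinatorial_formula_general
    {d r : ℕ}
    (A V : ℕ → Matrix (Fin d) (Fin d) ℂ)
    (hcomm : ∀ i < r, ∀ j < r, Commute (A i) (A j))
    (Y : ℕ → Matrix (Fin d) (Fin d) ℂ)
    (hinit : ∀ i < r, Y i = V i)
    (hrec : ∀ n : ℕ, r ≤ n → Y n = ∑ j ∈ Finset.range r, A j * Y (n - (j + 1))) :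
    ∀ n : ℕ, r ≤ n →
      Y n = ∑ s ∈ Finset.range r, rho r A (n - s) *
        (∑ j ∈ Finset.Icc s (r - 1), A j * V (s + (r - 1 - j))) :=
  fun _ hn => eq_sum_rho_mul_of_recurrence hcomm hinit hrec hn

/-- Combinatorial formula for a matrix-valued sequence defined by initial matrices
`V₀, …, V_{r-1}` and the recurrence `Y_n = A₀ Y_{n-1} + A₁ Y_{n-2} + ⋯ + A_{r-1} Y_{n-r}`
(`n ≥ r`) with pairwise commuting Hermitian coefficient matrices: for every `n ≥ r`,
`Y_n = Σ_{s=0}^{r-1} ρ(n−s, r; A) W_s` with `W_s = Σ_{j=s}^{r-1} A_j V_{s+r-1-j}`. -/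
theorem matrix_recurrence_combinatorial_formula
    {d r : ℕ} (hd : 1 ≤ d) (hr : 2 ≤ r)
    (A V : ℕ → Matrix (Fin d) (Fin d) ℂ)
    (hherm : ∀ i < r, (A i).IsHermitian)
    (hcomm : ∀ i < r, ∀ j < r, Commute (A i) (A j))
    (Y : ℕ → Matrix (Fin d) (Fin d) ℂ)
    (hinit : ∀ i < r, Y i = V i)
    (hrec : ∀ n : ℕ, r ≤ n → Y n = ∑ j ∈ Finset.range r, A j * Y (n - (j + 1))) :
    ∀ n : ℕ, r ≤ n →
      Y n = ∑ s ∈ Finset.range r, rho r A (n - s) *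
        (∑ j ∈ Finset.Icc s (r - 1), A j * V (s + (r - 1 - j))) :=
  matrix_recurrence_combinatorial_formula_general A V hcomm Y hinit hrec
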